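/- arXiv:1702.07177 — 2 statements merged into one kernel-verified Lean document; each statement's English description precedes it below -/
import Mathlib

section
/- For every integer k ≥ 1, the generating polynomials for Schur-coloured partitions satisfy G_{k_a}(q;a,b) = G_{k_{ab}}(q;a,b) + a q^k G_{(k−1)_a}(q;a,b). -/
/-- The three colours of Alladi and Gordon's weighted-words Schur theorem. -/
inductive SchurColor : Type
  | ab | a | b
  deriving DecidableEq

open SchurColor

/-- The order on colours: ab < a < b, encoded by an index. -/
def schurColorIdx : SchurColor → ℕ
  | ab => 0 | a => 1 | b => 2

/-- A Schur-coloured partition: a finite sequence of coloured positive integers with no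
part 1_{ab}, where consecutive parts differ by at least 2 if the colour of the larger one
is ab or is strictly smaller than the colour of the next one, and by at least 1
otherwise. -/
def IsSchurColoured (l : List (ℕ × SchurColor)) : Prop :=
  (∀ p ∈ l, 0 < p.1 ∧ ¬(p.1 = 1 ∧ p.2 = ab)) ∧
    l.Chain' (fun p q =>
      q.1 + (if p.2 = ab ∨ schurColorIdx p.2 < schurColorIdx q.2 then 2 else 1) ≤ p.1)

/-- The rank of the coloured integer k_x in the total order
1_{ab} < 1_a < 1_b < 2_{ab} < 2_a < 2_b < ⋯. -/
def schurRank (k : ℤ) (x : SchurColor) : ℤ := 3 * k + schurColorIdx x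

/-- The generating polynomial G_{k_x}(q;a,b) for Schur-coloured partitions with largest
part at most k_x, as a (polynomial) multivariate power series in the variables
q (index 0), a (index 1), b (index 2): the coefficient of a^u b^v q^n is the number of
Schur-coloured partitions of n with statistics u, v and largest part at most k_x.
By convention it equals 0 for k < 0 (and it equals 1 for k = 0 since no coloured positive
integer is ≤ 0_x). -/
noncomputable def schurG (k : ℤ) (x : SchurColor) : MvPowerSeries (Fin 3) ℤ :=
  fun m => if k < 0 then 0 else
    (Nat.card {l : List (ℕ × SchurColor) // IsSchurColoured l ∧
      (∀ p ∈ l, schurRank p.1 p.2 ≤ schurRank k x) ∧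
      (l.map Prod.fst).sum = m 0 ∧
      l.countP (fun p => decide (p.2 = a ∨ p.2 = ab)) = m 1 ∧
      l.countP (fun p => decide (p.2 = b ∨ p.2 = ab)) = m 2} : ℤ)

/-!
A partition with largest part at most `k_a` either has all its parts at most `k_{ab}`, or its
largest part is `k_a` itself. In the second case the remaining parts form a Schur-coloured
partition with largest part at most `(k-1)_a`, and conversely: a part `q` may follow `k_a`
exactly when `q ≤ (k-1)_a`, because after a part of colour `a` the gap must be `2` precisely
when the next part has colour `b`. Removing the part `k_a` divides the weight by `a q^k`.
-/

instance : Fintype SchurColor := ⟨{ab, a, b}, fun x => by cases x <;> simp⟩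

theorem finite_setOf_pos_sum_map_fst_eq {α : Type*} [Finite α] (n : ℕ) :
    {l : List (ℕ × α) | (∀ p ∈ l, 0 < p.1) ∧ (l.map Prod.fst).sum = n}.Finite := by
  have hfin : (Set.range (Composition.blocks (n := n)) ×ˢ {c : List α | c.length ≤ n}).Finite :=
    (Set.finite_range _).prod (List.finite_length_le α n)
  refine (hfin.preimage (f := fun l => (l.map Prod.fst, l.map Prod.snd)) ?_).subset ?_
  · intro l₁ _ l₂ _ h
    simpa [← List.zip_of_prod rfl rfl] using congrArg (fun p => p.1.zip p.2) h
  · rintro l ⟨hpos, hsum⟩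
    let c : Composition n := ⟨l.map Prod.fst, fun hi => by
      obtain ⟨p, hp, rfl⟩ := List.mem_map.1 hi
      exact hpos p hp, hsum⟩
    refine ⟨⟨c, rfl⟩, ?_⟩
    show (l.map Prod.snd).length ≤ n
    rw [List.length_map, ← List.length_map Prod.fst]
    exact c.length_le

def SchurStep (p q : ℕ × SchurColor) : Prop :=
  q.1 + (if p.2 = ab ∨ schurColorIdx p.2 < schurColorIdx q.2 then 2 else 1) ≤ p.1

def IsSchurPart (p : ℕ × SchurColor) : Prop := 0 < p.1 ∧ ¬(p.1 = 1 ∧ p.2 = ab)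

theorem isSchurColoured_iff {l : List (ℕ × SchurColor)} :
    IsSchurColoured l ↔ (∀ p ∈ l, IsSchurPart p) ∧ l.IsChain SchurStep :=
  Iff.rfl

theorem isSchurColoured_cons {p : ℕ × SchurColor} {l : List (ℕ × SchurColor)} :
    IsSchurColoured (p :: l) ↔
      IsSchurPart p ∧ (∀ q ∈ l.head?, SchurStep p q) ∧ IsSchurColoured l := by
  simp only [isSchurColoured_iff, List.mem_cons, forall_eq_or_imp, List.isChain_cons]
  tauto

theorem schurRank_lt_of_schurStep {p q : ℕ × SchurColor} (h : SchurStep p q) :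
    schurRank q.1 q.2 < schurRank p.1 p.2 := by
  obtain ⟨n, x⟩ := p
  obtain ⟨m, y⟩ := q
  unfold SchurStep at h
  cases x <;> cases y <;> simp [schurRank, schurColorIdx] at h ⊢ <;> omega

theorem schurRank_lt_of_isSchurColoured_cons {p : ℕ × SchurColor} {l : List (ℕ × SchurColor)}
    (hl : IsSchurColoured (p :: l)) : ∀ q ∈ l, schurRank q.1 q.2 < schurRank p.1 p.2 := by
  have hchain : (p :: l).IsChain fun p q => schurRank q.1 q.2 < schurRank p.1 p.2 :=
    (isSchurColoured_iff.1 hl).2.imp fun _ _ => schurRank_lt_of_schurStep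
  exact (List.pairwise_cons.1 (List.isChain_iff_pairwise.1 hchain)).1

theorem schurRank_inj {n m : ℤ} {x y : SchurColor} :
    schurRank n x = schurRank m y ↔ n = m ∧ x = y := by
  constructor
  · cases x <;> cases y <;> simp [schurRank, schurColorIdx] <;> omega
  · rintro ⟨rfl, rfl⟩
    rfl

def schurPartitionsLE (k : ℤ) (x : SchurColor) : Set (List (ℕ × SchurColor)) :=
  {l | IsSchurColoured l ∧ ∀ p ∈ l, schurRank p.1 p.2 ≤ schurRank k x}

theorem cons_mem_schurPartitionsLE {k : ℤ} {x : SchurColor} {p : ℕ × SchurColor}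
    {l : List (ℕ × SchurColor)} :
    p :: l ∈ schurPartitionsLE k x ↔
      IsSchurColoured (p :: l) ∧ schurRank p.1 p.2 ≤ schurRank k x := by
  refine ⟨fun h => ⟨h.1, h.2 p List.mem_cons_self⟩, fun ⟨hl, hp⟩ => ⟨hl, ?_⟩⟩
  simp only [List.mem_cons, forall_eq_or_imp]
  exact ⟨hp, fun q hq => (schurRank_lt_of_isSchurColoured_cons hl q hq).le.trans hp⟩

theorem schurPartitionsLE_mono {k k' : ℤ} {x x' : SchurColor}
    (h : schurRank k x ≤ schurRank k' x') : schurPartitionsLE k x ⊆ schurPartitionsLE k' x' :=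
  fun _ hl => ⟨hl.1, fun p hp => (hl.2 p hp).trans h⟩

theorem schurStep_ka_iff {k : ℕ} {q : ℕ × SchurColor} :
    SchurStep (k, a) q ↔ schurRank q.1 q.2 ≤ schurRank ((k : ℤ) - 1) a := by
  obtain ⟨m, y⟩ := q
  cases y <;> simp [SchurStep, schurRank, schurColorIdx] <;> omega

theorem schurPartitionsLE_a_eq_union {k : ℕ} (hk : 0 < k) :
    schurPartitionsLE k a =
      schurPartitionsLE k ab ∪ List.cons (k, a) '' schurPartitionsLE ((k : ℤ) - 1) a := by
  ext l
  constructor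
  · rcases l with _ | ⟨⟨n, x⟩, t⟩
    · exact fun h => Or.inl ⟨h.1, by simp⟩
    intro hmem
    obtain ⟨hcol, hp⟩ := cons_mem_schurPartitionsLE.1 hmem
    rcases hp.lt_or_eq with hlt | heq
    · refine Or.inl (cons_mem_schurPartitionsLE.2 ⟨hcol, ?_⟩)
      simp only [schurRank, schurColorIdx] at hlt ⊢
      omega
    · obtain ⟨hn, rfl⟩ := schurRank_inj.1 heq
      obtain rfl : n = k := by exact_mod_cast hn
      obtain ⟨-, hstep, ht⟩ := isSchurColoured_cons.1 hcol
      refine Or.inr ⟨t, ?_, rfl⟩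
      cases t with
      | nil => exact ⟨ht, by simp⟩
      | cons q t => exact cons_mem_schurPartitionsLE.2 ⟨ht, schurStep_ka_iff.1 (hstep q rfl)⟩
  · rintro (hl | ⟨t, ht, rfl⟩)
    · exact schurPartitionsLE_mono (by simp [schurRank, schurColorIdx]) hl
    · refine cons_mem_schurPartitionsLE.2 ⟨isSchurColoured_cons.2 ⟨⟨hk, by simp⟩, ?_, ht.1⟩, le_rfl⟩
      exact fun q hq => schurStep_ka_iff.2 (ht.2 q (List.mem_of_mem_head? hq))

theorem disjoint_schurPartitionsLE_ab_image_cons (k : ℕ) (s : Set (List (ℕ × SchurColor))) :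
    Disjoint (schurPartitionsLE k ab) (List.cons (k, a) '' s) := by
  rw [Set.disjoint_left]
  rintro _ hl ⟨t, -, rfl⟩
  have := hl.2 (k, a) List.mem_cons_self
  simp [schurRank, schurColorIdx] at this

noncomputable def schurWeight (l : List (ℕ × SchurColor)) : Fin 3 →₀ ℕ :=
  Finsupp.single 0 (l.map Prod.fst).sum +
    Finsupp.single 1 (l.countP fun p => decide (p.2 = a ∨ p.2 = ab)) +
    Finsupp.single 2 (l.countP fun p => decide (p.2 = b ∨ p.2 = ab))

theorem schurWeight_eq_iff {l : List (ℕ × SchurColor)} {m : Fin 3 →₀ ℕ} :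
    schurWeight l = m ↔ (l.map Prod.fst).sum = m 0 ∧
      l.countP (fun p => decide (p.2 = a ∨ p.2 = ab)) = m 1 ∧
      l.countP (fun p => decide (p.2 = b ∨ p.2 = ab)) = m 2 := by
  simp [Finsupp.ext_iff, Fin.forall_fin_succ, schurWeight]

theorem schurWeight_cons_ka (k : ℕ) (l : List (ℕ × SchurColor)) :
    schurWeight ((k, a) :: l) = Finsupp.single 1 1 + Finsupp.single 0 k + schurWeight l := by
  ext i
  fin_cases i <;> simp [schurWeight, add_comm]

theorem coeff_schurG {k : ℤ} (hk : 0 ≤ k) (x : SchurColor) (m : Fin 3 →₀ ℕ) :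
    MvPowerSeries.coeff m (schurG k x) = {l ∈ schurPartitionsLE k x | schurWeight l = m}.ncard := by
  rw [MvPowerSeries.coeff_apply, schurG, if_neg (not_lt.2 hk), ← Nat.card_coe_set_eq]
  simp only [schurPartitionsLE, schurWeight_eq_iff, Set.sep_ofPred, and_assoc]
  rfl

theorem finite_schurPartitionsLE_sep_weight_eq (k : ℤ) (x : SchurColor) (m : Fin 3 →₀ ℕ) :
    {l ∈ schurPartitionsLE k x | schurWeight l = m}.Finite :=
  (finite_setOf_pos_sum_map_fst_eq (m 0)).subset fun _ hl =>
    ⟨fun p hp => (hl.1.1.1 p hp).1, (schurWeight_eq_iff.1 hl.2).1⟩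

theorem ncard_sep_add_eq {α σ : Type*} (s : Set α) (w : α → σ →₀ ℕ) (d m : σ →₀ ℕ) :
    {x ∈ s | d + w x = m}.ncard = if d ≤ m then {x ∈ s | w x = m - d}.ncard else 0 := by
  split_ifs with h
  · congr
    ext x
    simp [eq_tsub_iff_add_eq_of_le h, add_comm]
  · convert Set.ncard_empty α
    ext x
    simp only [Set.mem_ofPred_eq, Set.mem_empty_iff_false, iff_false, not_and]
    exact fun _ hx => h (hx ▸ le_self_add)

theorem ncard_schurPartitionsLE_a {k : ℕ} (hk : 0 < k) (m : Fin 3 →₀ ℕ) :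
    {l ∈ schurPartitionsLE k a | schurWeight l = m}.ncard =
      {l ∈ schurPartitionsLE k ab | schurWeight l = m}.ncard +
        {t ∈ schurPartitionsLE ((k : ℤ) - 1) a |
          Finsupp.single 1 1 + Finsupp.single 0 k + schurWeight t = m}.ncard := by
  have hsplit : {l ∈ schurPartitionsLE k a | schurWeight l = m} =
      {l ∈ schurPartitionsLE k ab | schurWeight l = m} ∪ List.cons (k, a) ''
        {t ∈ schurPartitionsLE ((k : ℤ) - 1) a |
          Finsupp.single 1 1 + Finsupp.single 0 k + schurWeight t = m} := by
    ext l
    simp only [schurPartitionsLE_a_eq_union hk, Set.mem_ofPred_eq, Set.mem_union, Set.mem_image]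
    constructor
    · rintro ⟨hl | ⟨t, ht, rfl⟩, hw⟩
      · exact Or.inl ⟨hl, hw⟩
      · exact Or.inr ⟨t, ⟨ht, schurWeight_cons_ka k t ▸ hw⟩, rfl⟩
    · rintro (⟨hl, hw⟩ | ⟨t, ⟨ht, hw⟩, rfl⟩)
      · exact ⟨Or.inl hl, hw⟩
      · exact ⟨Or.inr ⟨t, ht, rfl⟩, (schurWeight_cons_ka k t).trans hw⟩
  have hfin := finite_schurPartitionsLE_sep_weight_eq k a m
  rw [hsplit] at hfin ⊢
  rw [Set.ncard_union_eq
      ((disjoint_schurPartitionsLE_ab_image_cons k _).mono_left (Set.sep_subset _ _))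
      (hfin.subset Set.subset_union_left) (hfin.subset Set.subset_union_right),
    Set.ncard_image_of_injective _ List.cons_injective]

open MvPowerSeries in
/-- G_{k_a}(q;a,b) = G_{k_{ab}}(q;a,b) + a q^k G_{(k−1)_a}(q;a,b) for k ≥ 1. -/
theorem schurG_rec_a (k : ℕ) (hk : 1 ≤ k) :
    schurG k SchurColor.a =
      schurG k SchurColor.ab +
        X 1 * (X 0 : MvPowerSeries (Fin 3) ℤ) ^ k * schurG ((k : ℤ) - 1) SchurColor.a := by
  have hX : X 1 * (X 0 : MvPowerSeries (Fin 3) ℤ) ^ k =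
      monomial (Finsupp.single 1 1 + Finsupp.single 0 k) 1 := by
    rw [X_pow_eq, X, monomial_mul_monomial, one_mul]
  ext m
  rw [map_add, hX, coeff_monomial_mul, one_mul, coeff_schurG (by positivity),
    coeff_schurG (by positivity), ncard_schurPartitionsLE_a hk, ncard_sep_add_eq, Nat.cast_add]
  split_ifs
  · rw [coeff_schurG (by omega)]
  · rfl
end

section
/- For every natural number k ≥ 0, the generating polynomials for Schur-coloured partitions satisfy G_{(k+2)_{ab}}(q;a,b) = (1 + aq)(1 + bq) · G_{k_b}(q;aq,bq), where G_{k_b}(q;aq,bq) denotes the polynomial obtained from G_{k_b}(q;a,b) ∈ ℤ[q,a,b] by substituting a ↦ aq and b ↦ bq. -/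
open SchurColor

/-- The substitution a ↦ aq, b ↦ bq on power series in q (index 0), a (index 1),
b (index 2): the coefficient of a^u b^v q^n of the image is the coefficient of
a^u b^v q^{n-u-v} of the original (and 0 when n < u + v). -/
noncomputable def substAQBQ (F : MvPowerSeries (Fin 3) ℤ) : MvPowerSeries (Fin 3) ℤ :=
  fun m => if m 1 + m 2 ≤ m 0 then F (Finsupp.update m 0 (m 0 - m 1 - m 2)) else 0

/-!
Removing the largest part of a Schur-coloured partition gives the recurrences
`G_{(k+1)_b} = G_{(k+1)_a} + b q^{k+1} G_{k_b}`, `G_{(k+1)_a} = G_{(k+1)_{ab}} + a q^{k+1} G_{k_a}`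
and `G_{(k+2)_{ab}} = G_{(k+1)_b} + ab q^{k+2} G_{k_b}`. Eliminating `G_a` and `G_{ab}` gives a
second-order recurrence for `G_{k_b}`, from which both `G_{(k+2)_{ab}}(q;a,b)` and
`(1 + aq)(1 + bq) G_{k_b}(q;aq,bq)`, as sequences in `k`, satisfy
`F_{k+2} = (1 + (a + b) q^{k+3}) F_{k+1} + ab q^{k+4} (1 - q^{k+1}) F_k`.
They agree for `k = 0, 1`.
-/

open MvPowerSeries Finsupp

noncomputable def partWeight (p : ℕ × SchurColor) : Fin 3 →₀ ℕ :=
  single 0 p.1 + single 1 (if p.2 = a ∨ p.2 = ab then 1 else 0) +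
    single 2 (if p.2 = b ∨ p.2 = ab then 1 else 0)

noncomputable def listWeight (l : List (ℕ × SchurColor)) : Fin 3 →₀ ℕ :=
  single 0 (l.map Prod.fst).sum + single 1 (l.countP fun p => decide (p.2 = a ∨ p.2 = ab)) +
    single 2 (l.countP fun p => decide (p.2 = b ∨ p.2 = ab))

@[simp]
lemma listWeight_nil : listWeight [] = 0 := by simp [listWeight]

@[simp]
lemma listWeight_cons (p : ℕ × SchurColor) (l : List (ℕ × SchurColor)) :
    listWeight (p :: l) = partWeight p + listWeight l := by
  ext i
  fin_cases i <;> simp [listWeight, partWeight, List.countP_cons] <;> omega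

lemma listWeight_eq_iff {l : List (ℕ × SchurColor)} {m : Fin 3 →₀ ℕ} :
    listWeight l = m ↔ (l.map Prod.fst).sum = m 0 ∧
      l.countP (fun p => decide (p.2 = a ∨ p.2 = ab)) = m 1 ∧
      l.countP (fun p => decide (p.2 = b ∨ p.2 = ab)) = m 2 := by
  constructor
  · rintro rfl
    simp [listWeight]
  · rintro ⟨h0, h1, h2⟩
    ext i
    fin_cases i <;> simp_all [listWeight]

lemma length_le_degree_listWeight (l : List (ℕ × SchurColor)) :
    l.length ≤ (listWeight l).degree := by
  induction l with
  | nil => simp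
  | cons p l ih =>
    have hp : 1 ≤ (partWeight p).degree := by
      obtain ⟨n, c⟩ := p
      cases c <;> simp [partWeight]
    simp only [listWeight_cons, map_add, List.length_cons]
    omega

lemma le_listWeight_of_mem {p : ℕ × SchurColor} {l : List (ℕ × SchurColor)} (hp : p ∈ l) :
    partWeight p ≤ listWeight l := by
  induction l with
  | nil => simp at hp
  | cons q l ih =>
    rw [listWeight_cons]
    rcases List.mem_cons.1 hp with rfl | hp
    · exact le_self_add
    · exact (ih hp).trans le_add_self

lemma finite_setOf_listWeight_eq (m : Fin 3 →₀ ℕ) :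
    {l : List (ℕ × SchurColor) | listWeight l = m}.Finite := by
  -- Every part has nonzero weight, so such a list has length at most `m.degree`.
  let S : Set (ℕ × SchurColor) := {p | partWeight p ≤ m}
  have hS : S.Finite := by
    refine ((Set.finite_Iic (m 0)).prod (Set.toFinite {ab, a, b})).subset fun p hp => ?_
    obtain ⟨n, c⟩ := p
    have := (le_def.1 hp) 0
    cases c <;> simp_all [partWeight]
  have := hS.to_subtype
  refine ((List.finite_length_le S m.degree).image (List.map Subtype.val)).subset ?_
  intro l (hl : listWeight l = m)
  lift l to List S using fun p hp => (le_listWeight_of_mem hp).trans_eq hl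
  exact ⟨l, by simpa [← hl] using length_le_degree_listWeight (l.map Subtype.val), rfl⟩

noncomputable def genFun (S : Set (List (ℕ × SchurColor))) : MvPowerSeries (Fin 3) ℤ :=
  fun m => ((S ∩ {l | listWeight l = m}).ncard : ℤ)

lemma genFun_union {S T : Set (List (ℕ × SchurColor))} (h : Disjoint S T) :
    genFun (S ∪ T) = genFun S + genFun T := by
  ext m
  have hfin := finite_setOf_listWeight_eq m
  rw [map_add]
  simp only [coeff_apply, genFun]
  rw [Set.union_inter_distrib_right, Set.ncard_union_eq
    (h.mono Set.inter_subset_left Set.inter_subset_left) (hfin.inter_of_right S)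
    (hfin.inter_of_right T), Nat.cast_add]

lemma genFun_image_cons (p : ℕ × SchurColor) (S : Set (List (ℕ × SchurColor))) :
    genFun (List.cons p '' S) = monomial (partWeight p) 1 * genFun S := by
  ext m
  rw [coeff_monomial_mul, one_mul]
  simp only [coeff_apply, genFun]
  have hcons : List.cons p '' S ∩ {l | listWeight l = m} =
      List.cons p '' (S ∩ {t | partWeight p + listWeight t = m}) := by
    ext l
    simp only [Set.mem_inter_iff, Set.mem_image, Set.mem_ofPred_eq]
    constructor
    · rintro ⟨⟨t, ht, rfl⟩, hw⟩
      exact ⟨t, ⟨ht, by simpa using hw⟩, rfl⟩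
    · rintro ⟨t, ⟨ht, hw⟩, rfl⟩
      exact ⟨⟨t, ht, rfl⟩, by simpa using hw⟩
  rw [hcons, Set.ncard_image_of_injective _ List.cons_injective]
  split_ifs with h
  · congr 3
    ext t
    simp only [Set.mem_ofPred_eq, eq_tsub_iff_add_eq_of_le h, add_comm]
  · have hempty : S ∩ {t | partWeight p + listWeight t = m} = ∅ :=
      Set.eq_empty_of_forall_notMem fun t ht => h (ht.2 ▸ le_self_add)
    rw [hempty, Set.ncard_empty, Nat.cast_zero]

lemma genFun_singleton_nil : genFun {[]} = 1 := by
  ext m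
  rw [coeff_one]
  simp only [coeff_apply, genFun]
  split_ifs with hm
  · subst hm
    simp
  · have hempty : {[]} ∩ {l | listWeight l = m} = ∅ :=
      Set.eq_empty_of_forall_notMem fun l ⟨hl, hw⟩ => hm (by
        rw [← (hw : listWeight l = m), Set.mem_singleton_iff.1 hl, listWeight_nil])
    rw [hempty, Set.ncard_empty, Nat.cast_zero]

def SchurFollows (p q : ℕ × SchurColor) : Prop :=
  q.1 + (if p.2 = ab ∨ schurColorIdx p.2 < schurColorIdx q.2 then 2 else 1) ≤ p.1

lemma SchurFollows.lt {p q : ℕ × SchurColor} (h : SchurFollows p q) : q.1 < p.1 := by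
  unfold SchurFollows at h
  split_ifs at h <;> omega

lemma SchurFollows.trans {p q r : ℕ × SchurColor} (hpq : SchurFollows p q)
    (hqr : SchurFollows q r) : SchurFollows p r := by
  have := hqr.lt
  unfold SchurFollows at hpq ⊢
  split_ifs at hpq ⊢ <;> omega

instance : Trans SchurFollows SchurFollows SchurFollows := ⟨SchurFollows.trans⟩

lemma IsSchurColoured.pairwise {l : List (ℕ × SchurColor)} (hl : IsSchurColoured l) :
    l.Pairwise SchurFollows :=
  (show l.IsChain SchurFollows from hl.2).pairwise

lemma schurRank_lt_of_lt {k k' : ℤ} (x x' : SchurColor) (h : k < k') :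
    schurRank k x < schurRank k' x' := by
  cases x <;> cases x' <;> simp only [schurRank, schurColorIdx] <;> omega

lemma schurRank_inj_s13 {k k' : ℤ} {x x' : SchurColor} :
    schurRank k x = schurRank k' x' ↔ k = k' ∧ x = x' := by
  cases x <;> cases x' <;> simp [schurRank, schurColorIdx] <;> omega

def schurSet (k : ℤ) (x : SchurColor) : Set (List (ℕ × SchurColor)) :=
  {l | IsSchurColoured l ∧ ∀ p ∈ l, schurRank p.1 p.2 ≤ schurRank k x}

lemma schurG_eq_genFun {k : ℤ} (hk : 0 ≤ k) (x : SchurColor) :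
    schurG k x = genFun (schurSet k x) := by
  ext m
  simp only [coeff_apply, schurG, genFun, if_neg (not_lt.2 hk), ← Nat.card_coe_set_eq]
  congr 1
  refine Nat.card_congr (Equiv.subtypeEquivRight fun l => ?_)
  simp only [schurSet, Set.mem_inter_iff, Set.mem_ofPred_eq, listWeight_eq_iff, and_assoc]

section RemoveLargestPart

variable {k : ℕ} {k' k'' : ℤ} {x x' x'' : SchurColor}

/- Below, `k'_{x'}` is the predecessor of the part `k_x` among coloured integers and `k''_{x''}`
is the largest coloured integer that may follow `k_x` in a Schur-coloured partition. -/

lemma disjoint_schurSet_image_cons (hpred : schurRank k' x' < schurRank k x)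
    (S : Set (List (ℕ × SchurColor))) :
    Disjoint (schurSet k' x') (List.cons (k, x) '' S) := by
  refine Set.disjoint_left.2 fun l hl ⟨t, _, hlt⟩ => ?_
  have : schurRank k x ≤ schurRank k' x' := hl.2 (k, x) (hlt ▸ List.mem_cons_self)
  omega

lemma schurSet_eq_union (hk : 0 < k) (hx : ¬(k = 1 ∧ x = ab))
    (hpred : schurRank k' x' + 1 = schurRank k x)
    (hfollow : ∀ q : ℕ × SchurColor,
      schurRank q.1 q.2 ≤ schurRank k'' x'' ↔ SchurFollows (k, x) q) :
    schurSet k x = schurSet k' x' ∪ List.cons (k, x) '' schurSet k'' x'' := by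
  ext l
  constructor
  · rintro ⟨hsc, hrank⟩
    by_cases hmem : (k, x) ∈ l
    · obtain ⟨p, t, rfl⟩ := List.exists_cons_of_ne_nil (List.ne_nil_of_mem hmem)
      have hp : p = (k, x) := by
        rcases List.mem_cons.1 hmem with h | h
        · exact h.symm
        · have hlt : schurRank k x < schurRank p.1 p.2 := schurRank_lt_of_lt x p.2
            (Int.ofNat_lt.2 (List.rel_of_pairwise_cons hsc.pairwise h).lt)
          exact absurd (hrank p List.mem_cons_self) (not_le.2 hlt)
      subst hp
      refine Or.inr ⟨t, ⟨⟨fun q hq => hsc.1 q (List.mem_cons_of_mem _ hq), hsc.2.tail⟩,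
        fun q hq => (hfollow q).2 (List.rel_of_pairwise_cons hsc.pairwise hq)⟩, rfl⟩
    · refine Or.inl ⟨hsc, fun p hp => ?_⟩
      have hne : schurRank p.1 p.2 ≠ schurRank k x := fun h => by
        obtain ⟨h1, h2⟩ := schurRank_inj_s13.1 h
        have hpk : p = (k, x) := Prod.ext (by exact_mod_cast h1) h2
        exact hmem (hpk ▸ hp)
      have := hrank p hp
      omega
  · rintro (⟨hsc, hrank⟩ | ⟨t, ⟨hsc, hrank⟩, rfl⟩)
    · exact ⟨hsc, fun p hp => (hrank p hp).trans (by omega)⟩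
    · refine ⟨⟨List.forall_mem_cons.2 ⟨⟨hk, hx⟩, hsc.1⟩, List.isChain_cons.2
        ⟨fun q hq => (hfollow q).1 (hrank q (List.mem_of_mem_head? hq)), hsc.2⟩⟩,
        List.forall_mem_cons.2 ⟨le_rfl, fun q hq => (schurRank_lt_of_lt q.2 x ?_).le⟩⟩
      exact_mod_cast ((hfollow q).1 (hrank q hq)).lt

end RemoveLargestPart

lemma schurG_eq_add_monomial_mul {k k' k'' : ℕ} {x x' x'' : SchurColor} (hk : 0 < k)
    (hx : ¬(k = 1 ∧ x = ab)) (hpred : schurRank k' x' + 1 = schurRank k x)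
    (hfollow : ∀ q : ℕ × SchurColor,
      schurRank q.1 q.2 ≤ schurRank k'' x'' ↔ SchurFollows (k, x) q) :
    schurG k x = schurG k' x' + monomial (partWeight (k, x)) 1 * schurG k'' x'' := by
  rw [schurG_eq_genFun (Int.natCast_nonneg k), schurG_eq_genFun (Int.natCast_nonneg k'),
    schurG_eq_genFun (Int.natCast_nonneg k''), schurSet_eq_union hk hx hpred hfollow,
    genFun_union (disjoint_schurSet_image_cons (by omega) _), genFun_image_cons]

lemma monomial_partWeight (p : ℕ × SchurColor) :
    (monomial (partWeight p) 1 : MvPowerSeries (Fin 3) ℤ) =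
      X 0 ^ p.1 * X 1 ^ (if p.2 = a ∨ p.2 = ab then 1 else 0) *
        X 2 ^ (if p.2 = b ∨ p.2 = ab then 1 else 0) := by
  rw [partWeight, X_pow_eq, X_pow_eq, X_pow_eq, monomial_mul_monomial, monomial_mul_monomial,
    one_mul, one_mul]

lemma schurG_add_two_ab (j : ℕ) :
    schurG (j + 2) ab = schurG (j + 1) b + X 1 * X 2 * X 0 ^ (j + 2) * schurG j b := by
  have h := schurG_eq_add_monomial_mul (k := j + 2) (k' := j + 1) (k'' := j) (x := ab) (x' := b)
    (x'' := b) (by omega) (by omega) (by simp only [schurRank, schurColorIdx]; push_cast; ring)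
    (by rintro ⟨n, c⟩; cases c <;> simp [schurRank, SchurFollows, schurColorIdx] <;> omega)
  push_cast at h
  rw [h, monomial_partWeight]
  congr 2
  simp +decide
  ring

lemma schurG_add_one_b (j : ℕ) :
    schurG (j + 1) b = schurG (j + 1) a + X 2 * X 0 ^ (j + 1) * schurG j b := by
  have h := schurG_eq_add_monomial_mul (k := j + 1) (k' := j + 1) (k'' := j) (x := b) (x' := a)
    (x'' := b) (by omega) (by simp) (by simp only [schurRank, schurColorIdx]; push_cast; ring)
    (by rintro ⟨n, c⟩; cases c <;> simp [schurRank, SchurFollows, schurColorIdx] <;> omega)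
  push_cast at h
  rw [h, monomial_partWeight]
  congr 2
  simp +decide
  ring

lemma schurG_add_one_a (j : ℕ) :
    schurG (j + 1) a = schurG (j + 1) ab + X 1 * X 0 ^ (j + 1) * schurG j a := by
  have h := schurG_eq_add_monomial_mul (k := j + 1) (k' := j + 1) (k'' := j) (x := a) (x' := ab)
    (x'' := a) (by omega) (by simp) (by simp only [schurRank, schurColorIdx]; push_cast; ring)
    (by rintro ⟨n, c⟩; cases c <;> simp [schurRank, SchurFollows, schurColorIdx] <;> omega)
  push_cast at h
  rw [h, monomial_partWeight]
  congr 2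
  simp +decide
  ring

lemma schurSet_eq_singleton_nil {k : ℤ} {x : SchurColor}
    (h : ∀ p : ℕ × SchurColor, 0 < p.1 → ¬(p.1 = 1 ∧ p.2 = ab) →
      schurRank k x < schurRank p.1 p.2) :
    schurSet k x = {[]} := by
  ext l
  refine ⟨fun ⟨hsc, hrank⟩ => ?_, fun hl => ?_⟩
  · obtain _ | ⟨p, t⟩ := l
    · rfl
    · have hp := hsc.1 p List.mem_cons_self
      exact absurd (hrank p List.mem_cons_self) (not_le.2 (h p hp.1 hp.2))
  · rw [Set.mem_singleton_iff.1 hl]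
    exact ⟨⟨by simp, List.isChain_nil⟩, by simp⟩

lemma schurG_zero (x : SchurColor) : schurG 0 x = 1 := by
  rw [schurG_eq_genFun le_rfl, schurSet_eq_singleton_nil, genFun_singleton_nil]
  rintro ⟨n, c⟩ hn -
  cases x <;> cases c <;> simp only [schurRank, schurColorIdx] at * <;> omega

lemma schurG_one_ab : schurG 1 ab = 1 := by
  rw [schurG_eq_genFun zero_le_one, schurSet_eq_singleton_nil, genFun_singleton_nil]
  rintro ⟨n, c⟩ hn hc
  cases c <;> simp_all [schurRank, schurColorIdx] <;> omega

lemma Finsupp.le_iff_fin_three {m n : Fin 3 →₀ ℕ} :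
    m ≤ n ↔ m 0 ≤ n 0 ∧ m 1 ≤ n 1 ∧ m 2 ≤ n 2 := by
  simp [Finsupp.le_def, Fin.forall_fin_succ]

lemma substAQBQ_monomial_mul (e : Fin 3 →₀ ℕ) (c : ℤ) (F : MvPowerSeries (Fin 3) ℤ) :
    substAQBQ (monomial e c * F) = monomial (e + single 0 (e 1 + e 2)) c * substAQBQ F := by
  ext m
  rw [coeff_monomial_mul]
  simp only [coeff_apply, substAQBQ]
  rw [← coeff_apply (monomial e c * F), coeff_monomial_mul]
  simp only [coeff_apply, Finsupp.le_iff_fin_three, update_apply, Finsupp.tsub_apply,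
    Finsupp.add_apply, single_apply, Fin.isValue, Fin.reduceEq, if_true, if_false]
  split_ifs <;> try omega
  congr 2
  ext i
  fin_cases i <;> simp [update_apply]
  omega

lemma substAQBQ_add (F G : MvPowerSeries (Fin 3) ℤ) :
    substAQBQ (F + G) = substAQBQ F + substAQBQ G := by
  ext m
  rw [map_add]
  simp only [coeff_apply, substAQBQ]
  split_ifs
  · exact map_add (coeff _) F G
  · rw [add_zero]

lemma substAQBQ_sub (F G : MvPowerSeries (Fin 3) ℤ) :
    substAQBQ (F - G) = substAQBQ F - substAQBQ G := by
  ext m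
  rw [map_sub]
  simp only [coeff_apply, substAQBQ]
  split_ifs
  · exact map_sub (coeff _) F G
  · rw [sub_zero]

lemma substAQBQ_one : substAQBQ 1 = 1 := by
  ext m
  rw [coeff_one]
  simp only [coeff_apply, substAQBQ]
  rw [← coeff_apply (1 : MvPowerSeries (Fin 3) ℤ), coeff_one]
  split_ifs <;> simp_all [Finsupp.ext_iff, Fin.forall_fin_succ, update_apply]
  omega

lemma substAQBQ_X0_pow_mul (n : ℕ) (F : MvPowerSeries (Fin 3) ℤ) :
    substAQBQ (X 0 ^ n * F) = X 0 ^ n * substAQBQ F := by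
  rw [X_pow_eq, substAQBQ_monomial_mul]
  simp

lemma substAQBQ_X1_mul (F : MvPowerSeries (Fin 3) ℤ) :
    substAQBQ (X 1 * F) = X 1 * X 0 * substAQBQ F := by
  rw [X_def, substAQBQ_monomial_mul, X_def, monomial_mul_monomial]
  simp

lemma substAQBQ_X2_mul (F : MvPowerSeries (Fin 3) ℤ) :
    substAQBQ (X 2 * F) = X 2 * X 0 * substAQBQ F := by
  rw [X_def, substAQBQ_monomial_mul, X_def, monomial_mul_monomial]
  simp

lemma eq_of_two_step_recurrence {α : Type*} {f g : ℕ → α} (step : ℕ → α → α → α)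
    (hf : ∀ j, f (j + 2) = step j (f (j + 1)) (f j))
    (hg : ∀ j, g (j + 2) = step j (g (j + 1)) (g j)) (h0 : f 0 = g 0) (h1 : f 1 = g 1) :
    f = g := by
  have h : ∀ n, f n = g n ∧ f (n + 1) = g (n + 1) := by
    intro n
    induction n with
    | zero => exact ⟨h0, h1⟩
    | succ n ih => exact ⟨ih.2, by rw [hf, hg, ih.1, ih.2]⟩
  exact funext fun n => (h n).1

lemma schurG_b_recurrence (j : ℕ) :
    schurG ↑(j + 2) b = (1 + (X 1 + X 2) * X 0 ^ (j + 2)) * schurG ↑(j + 1) b +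
      X 1 * X 2 * X 0 ^ (j + 2) * (1 - X 0 ^ (j + 1)) * schurG j b := by
  have hb₁ := schurG_add_one_b (j + 1)
  have ha₁ := schurG_add_one_a (j + 1)
  have hab := schurG_add_two_ab j
  have hb₀ := schurG_add_one_b j
  push_cast at *
  ring_nf at *
  linear_combination hb₁ + ha₁ + hab - X 1 * X 0 ^ (j + 2) * hb₀

lemma schurG_ab_recurrence (j : ℕ) :
    schurG (↑(j + 2) + 2) ab = (1 + (X 1 + X 2) * X 0 ^ (j + 3)) * schurG (↑(j + 1) + 2) ab +
      X 1 * X 2 * X 0 ^ (j + 4) * (1 - X 0 ^ (j + 1)) * schurG (↑j + 2) ab := by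
  have h₂ := schurG_add_two_ab (j + 2)
  have h₁ := schurG_add_two_ab (j + 1)
  have h₀ := schurG_add_two_ab j
  have hc₁ := schurG_b_recurrence (j + 1)
  have hc₀ := schurG_b_recurrence j
  push_cast at *
  ring_nf at *
  linear_combination h₂ + hc₁ + X 1 * X 2 * X 0 ^ (j + 4) * hc₀ -
    (1 + (X 1 + X 2) * X 0 ^ (j + 3)) * h₁ -
    X 1 * X 2 * X 0 ^ (j + 4) * (1 - X 0 ^ (j + 1)) * h₀

lemma substAQBQ_schurG_b_recurrence (j : ℕ) :
    substAQBQ (schurG ↑(j + 2) b) =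
      (1 + (X 1 + X 2) * X 0 ^ (j + 3)) * substAQBQ (schurG ↑(j + 1) b) +
        X 1 * X 2 * X 0 ^ (j + 4) * (1 - X 0 ^ (j + 1)) * substAQBQ (schurG j b) := by
  have h : schurG ↑(j + 2) b = schurG ↑(j + 1) b + X 1 * (X 0 ^ (j + 2) * schurG ↑(j + 1) b) +
      X 2 * (X 0 ^ (j + 2) * schurG ↑(j + 1) b) + X 1 * (X 2 * (X 0 ^ (j + 2) * schurG j b)) -
      X 1 * (X 2 * (X 0 ^ (2 * j + 3) * schurG j b)) := by
    rw [schurG_b_recurrence]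
    ring
  rw [h]
  simp only [substAQBQ_add, substAQBQ_sub, substAQBQ_X1_mul, substAQBQ_X2_mul,
    substAQBQ_X0_pow_mul]
  ring

lemma schurG_one_b : schurG 1 b = 1 + X 1 * X 0 + X 2 * X 0 := by
  have hb := schurG_add_one_b 0
  have ha := schurG_add_one_a 0
  norm_num [schurG_zero, schurG_one_ab] at hb ha
  linear_combination hb + ha

lemma schurG_two_ab : schurG 2 ab = (1 + X 1 * X 0) * (1 + X 2 * X 0) := by
  have h := schurG_add_two_ab 0
  norm_num [schurG_zero, schurG_one_b] at h
  rw [h]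
  ring

lemma schurG_three_ab :
    schurG 3 ab = (1 + X 1 * X 0) * (1 + X 2 * X 0) * (1 + X 1 * X 0 ^ 2 + X 2 * X 0 ^ 2) := by
  have h := schurG_add_two_ab 1
  have hc := schurG_b_recurrence 0
  norm_num [schurG_zero, schurG_one_b] at h hc
  rw [h, hc]
  ring

lemma substAQBQ_schurG_one_b : substAQBQ (schurG 1 b) = 1 + X 1 * X 0 ^ 2 + X 2 * X 0 ^ 2 := by
  have h : schurG 1 b = 1 + X 1 * (X 0 ^ 1 * 1) + X 2 * (X 0 ^ 1 * 1) := by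
    rw [schurG_one_b]
    ring
  rw [h]
  simp only [substAQBQ_add, substAQBQ_one, substAQBQ_X1_mul, substAQBQ_X2_mul,
    substAQBQ_X0_pow_mul]
  ring

open MvPowerSeries in
/-- G_{(k+2)_{ab}}(q;a,b) = (1 + aq)(1 + bq) G_{k_b}(q;aq,bq) for all k ≥ 0. -/
theorem schurG_key (k : ℕ) :
    schurG ((k : ℤ) + 2) SchurColor.ab =
      (1 + X 1 * X 0) * (1 + X 2 * (X 0 : MvPowerSeries (Fin 3) ℤ)) *
        substAQBQ (schurG k SchurColor.b) := by
  have h := eq_of_two_step_recurrence (f := fun j : ℕ => schurG (↑j + 2) ab)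
    (g := fun j => (1 + X 1 * X 0) * (1 + X 2 * X 0) * substAQBQ (schurG j b))
    (fun j F G => (1 + (X 1 + X 2) * X 0 ^ (j + 3)) * F +
      X 1 * X 2 * X 0 ^ (j + 4) * (1 - X 0 ^ (j + 1)) * G)
    schurG_ab_recurrence
    (fun j => by simp only [substAQBQ_schurG_b_recurrence]; ring)
    (by simpa [schurG_zero, substAQBQ_one] using schurG_two_ab)
    (by norm_num [schurG_three_ab, substAQBQ_schurG_one_b])
  exact congrFun h k
end
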